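/- The PF-D0 coefficient function b1 satisfies lim_{v→0⁺} b1(v) = 90987349/53222400 and lim_{v→0⁺} (b1(v) − 90987349/53222400)/v² = −16301796103/290594304000; in particular b1 tends to the corresponding coefficient of the classical Quinlan–Tremaine method as v → 0. -/

import Mathlib

/-!
Expanding `sin (v / 2) ^ 10` into cosines of multiples of `v`, the numerator of
`(b₁(v) - b₁) / v²` becomes a trigonometric polynomial `∑ⱼ (αⱼ v² + βⱼ) cos (j v)`. Replacing each
`cos (j v)` by its Taylor polynomial of degree 14 costs `O(v¹⁶)` and leaves a polynomial in which
all powers below `v¹⁴` cancel, so the numerator is `K v¹⁴ + O(v¹⁶)`. The denominator is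
`v¹⁴ sinc (v / 2) ^ 10` up to a constant, and `sinc (v / 2) → 1`.
-/

open Filter

/-- The variable coefficient `b₁(v)` of the phase-fitted method PF-D0. -/
noncomputable def pfb1 (v : ℝ) : ℝ :=
  (((-124184636) * Real.cos v + 70378348 * Real.cos (2 * v) - 24862148 * Real.cos (3 * v)
        + 5153611 * Real.cos (4 * v)) * v ^ 2
      + 25 * (3013169 * v ^ 2 - 16128 * Real.cos (3 * v) + 32256 * Real.cos (4 * v)
        - 32256 * Real.cos (5 * v) + 16128 * Real.cos (6 * v)))
    / (206438400 * v ^ 2 * (Real.sin (v / 2)) ^ 10)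

/-- The variable coefficient `b₂(v)` of the phase-fitted method PF-D0. -/
noncomputable def pfb2 (v : ℝ) : ℝ :=
  (v ^ 2 * (159588050 * Real.cos v - 85350160 * Real.cos (2 * v)
        + 16708985 * Real.cos (3 * v) - 5153611 * Real.cos (5 * v))
      - 16 * (6496079 * v ^ 2 - 252000 * Real.cos (3 * v) + 504000 * Real.cos (4 * v)
        - 504000 * Real.cos (5 * v) + 252000 * Real.cos (6 * v)))
    / (206438400 * v ^ 2 * (Real.sin (v / 2)) ^ 10)

/-- The variable coefficient `b₃(v)` of the phase-fitted method PF-D0. -/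
noncomputable def pfb3 (v : ℝ) : ℝ :=
  (((-367257540) * Real.cos v + 183567900 * Real.cos (2 * v)
        - 16708985 * Real.cos (4 * v) + 24862148 * Real.cos (5 * v)) * v ^ 2
      + 81 * (3175117 * v ^ 2 - 224000 * Real.cos (3 * v) + 448000 * Real.cos (4 * v)
        - 448000 * Real.cos (5 * v) + 224000 * Real.cos (6 * v)))
    / (206438400 * v ^ 2 * (Real.sin (v / 2)) ^ 10)

/-- The variable coefficient `b₄(v)` of the phase-fitted method PF-D0. -/
noncomputable def pfb4 (v : ℝ) : ℝ :=
  (30675810 * v ^ 2 * Real.cos v - 42958788 * v ^ 2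
      + 75 * (161280 - 611893 * v ^ 2) * Real.cos (3 * v)
      + 140 * (152411 * v ^ 2 - 172800) * Real.cos (4 * v)
      + (24192000 - 17594587 * v ^ 2) * Real.cos (5 * v)
      - 12096000 * Real.cos (6 * v))
    / (51609600 * v ^ 2 * (Real.sin (v / 2)) ^ 10)

/-- The variable coefficient `b₅(v)` of the phase-fitted method PF-D0. -/
noncomputable def pfb5 (v : ℝ) : ℝ :=
  ((-61351620) * v ^ 2 * Real.cos (2 * v) + 85936557 * v ^ 2
      + 30 * (6120959 * v ^ 2 - 1411200) * Real.cos (3 * v)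
      + 25 * (3386880 - 3191761 * v ^ 2) * Real.cos (4 * v)
      + (62092318 * v ^ 2 - 84672000) * Real.cos (5 * v)
      + 42336000 * Real.cos (6 * v))
    / (103219200 * v ^ 2 * (Real.sin (v / 2)) ^ 10)

/-- The variable coefficient `b₆(v)` of the phase-fitted method PF-D0. -/
noncomputable def pfb6 (v : ℝ) : ℝ :=
  (((-171873114) * Real.cos v + 171835152 * Real.cos (2 * v)
        - 257184477 * Real.cos (3 * v) + 103937264 * Real.cos (4 * v)
        - 75329225 * Real.cos (5 * v)) * v ^ 2
      + 50803200 * (Real.cos (3 * v) - 2 * Real.cos (4 * v)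
        + 2 * Real.cos (5 * v) - Real.cos (6 * v)))
    / (103219200 * v ^ 2 * (Real.sin (v / 2)) ^ 10)


open Topology Asymptotics Finset Real

noncomputable def cosTaylor (n : ℕ) (x : ℝ) : ℝ :=
  ∑ k ∈ range n, (-1) ^ k * x ^ (2 * k) / (2 * k).factorial

theorem ofReal_cosTaylor (n : ℕ) (x : ℝ) :
    (cosTaylor n x : ℂ) = ((∑ m ∈ range (2 * n), ((x : ℂ) * Complex.I) ^ m / m.factorial)
      + ∑ m ∈ range (2 * n), (-(x : ℂ) * Complex.I) ^ m / m.factorial) / 2 := by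
  induction n with
  | zero => simp [cosTaylor]
  | succ n ih =>
    have hodd : (-(x : ℂ) * Complex.I) ^ (2 * n + 1) = -((x : ℂ) * Complex.I) ^ (2 * n + 1) := by
      rw [neg_mul, Odd.neg_pow (odd_two_mul_add_one n)]
    have heven : ((x : ℂ) * Complex.I) ^ (2 * n) = (-1) ^ n * (x : ℂ) ^ (2 * n) := by
      rw [mul_pow, pow_mul Complex.I, Complex.I_sq]
      ring
    have heven' : (-(x : ℂ) * Complex.I) ^ (2 * n) = (-1) ^ n * (x : ℂ) ^ (2 * n) := by
      rw [neg_mul, Even.neg_pow (even_two_mul n), heven]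
    rw [show 2 * (n + 1) = 2 * n + 1 + 1 by ring, sum_range_succ, sum_range_succ,
      sum_range_succ, sum_range_succ, hodd, heven, heven']
    simp only [cosTaylor, sum_range_succ] at ih ⊢
    push_cast [ih]
    ring

theorem isBigO_cos_sub_cosTaylor (n : ℕ) :
    (fun x => cos x - cosTaylor n x) =O[𝓝 0] (· ^ (2 * n)) := by
  rcases n.eq_zero_or_pos with rfl | hn
  · exact isBigO_of_le' (c := 1) _ fun x => by simpa [cosTaylor] using abs_cos_le_one x
  refine .of_bound ((2 * n).succ * ((2 * n).factorial * (2 * n) : ℝ)⁻¹) ?_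
  filter_upwards [Metric.closedBall_mem_nhds (0 : ℝ) one_pos] with x hx
  have hxI : ‖(x : ℂ) * Complex.I‖ ≤ 1 := by simpa using hx
  have hxI' : ‖-(x : ℂ) * Complex.I‖ ≤ 1 := by simpa using hx
  have h2n : 0 < 2 * n := by omega
  have hb := Complex.exp_bound hxI h2n
  have hb' := Complex.exp_bound hxI' h2n
  simp only [norm_mul, norm_neg, Complex.norm_I, mul_one, Complex.norm_real,
    Real.norm_eq_abs] at hb hb'
  calc ‖cos x - cosTaylor n x‖
      = ‖((Complex.exp (x * Complex.I)
            - ∑ m ∈ range (2 * n), ((x : ℂ) * Complex.I) ^ m / m.factorial)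
          + (Complex.exp (-x * Complex.I)
            - ∑ m ∈ range (2 * n), (-(x : ℂ) * Complex.I) ^ m / m.factorial)) / 2‖ := by
        rw [← Complex.norm_real]
        push_cast [ofReal_cosTaylor, Complex.ofReal_cos, Complex.cos]
        ring_nf
    _ ≤ _ := by
        rw [norm_div, Complex.norm_two, norm_pow, Real.norm_eq_abs]
        refine (div_le_div_of_nonneg_right (norm_add_le _ _) zero_le_two).trans ?_
        push_cast at hb hb' ⊢
        linarith

theorem isBigO_cos_mul_sub_cosTaylor (n : ℕ) (a : ℝ) :
    (fun x => cos (a * x) - cosTaylor n (a * x)) =O[𝓝 0] (· ^ (2 * n)) := by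
  have ha : Tendsto (a * ·) (𝓝 0) (𝓝 0) := by
    simpa using (continuous_const_mul a).tendsto 0
  refine ((isBigO_cos_sub_cosTaylor n).comp_tendsto ha).trans ?_
  simpa only [Function.comp_def, mul_pow] using isBigO_const_mul_self (a ^ (2 * n)) _ _

theorem isBigO_sum_mul_cos_sub_cosTaylor {ι : Type*} (s : Finset ι) (p : ι → ℝ → ℝ)
    (hp : ∀ i ∈ s, ContinuousAt (p i) 0) (a : ι → ℝ) (n : ℕ) :
    (fun x => ∑ i ∈ s, p i x * (cos (a i * x) - cosTaylor n (a i * x))) =O[𝓝 0]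
      (· ^ (2 * n)) := by
  refine IsBigO.fun_sum fun i hi => ?_
  have hbdd : p i =O[𝓝 0] (fun _ => (1 : ℝ)) := (hp i hi).tendsto.isBigO_one ℝ
  simpa using hbdd.mul (isBigO_cos_mul_sub_cosTaylor n (a i))

theorem tendsto_div_pow_of_isBigO {𝕜 : Type*} [NormedField 𝕜] {f : 𝕜 → 𝕜} {c : 𝕜} {m n : ℕ}
    (hmn : m < n) (h : (fun x => f x - c * x ^ m) =O[𝓝 0] (· ^ n)) :
    Tendsto (fun x => f x / x ^ m) (𝓝[≠] 0) (𝓝 c) := by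
  have ho : (fun x => f x - c * x ^ m) =o[𝓝[≠] 0] (· ^ m) :=
    (h.trans_isLittleO (isLittleO_pow_pow hmn)).mono nhdsWithin_le_nhds
  have hz : ∀ᶠ x in 𝓝[≠] (0 : 𝕜), x ^ m = 0 → f x - c * x ^ m = 0 :=
    eventually_nhdsWithin_of_forall fun x hx h0 => absurd h0 (pow_ne_zero m hx)
  simpa using (((isLittleO_iff_tendsto' hz).1 ho).add_const c).congr'
    (eventually_nhdsWithin_of_forall fun x hx => by
      rw [sub_div, mul_div_cancel_right₀ _ (pow_ne_zero m hx), sub_add_cancel])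

theorem sin_half_pow_ten (x : ℝ) :
    sin (x / 2) ^ 10 = (126 - 210 * cos x + 120 * cos (2 * x) - 45 * cos (3 * x)
      + 10 * cos (4 * x) - cos (5 * x)) / 512 := by
  have h2 : sin (x / 2) ^ 2 = (1 - cos x) / 2 := by
    rw [sin_sq, cos_sq, show 2 * (x / 2) = x by ring]
    ring
  have h4 : cos (4 * x) = 2 * cos (2 * x) ^ 2 - 1 := by
    rw [show 4 * x = 2 * (2 * x) by ring, cos_two_mul]
  have h5 : cos (5 * x) + cos (3 * x) = 2 * cos (4 * x) * cos x := by
    rw [cos_add_cos]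
    ring_nf
  rw [show sin (x / 2) ^ 10 = (sin (x / 2) ^ 2) ^ 5 by ring, h2,
    eq_sub_of_add_eq h5, h4, cos_three_mul, cos_two_mul]
  ring

/-- With `C = cos` this is `(pfb1 v - 90987349 / 53222400) * 206438400 v² sin (v / 2) ^ 10`,
expanded with `sin_half_pow_ten`. -/
noncomputable def pfb1Defect (C : ℝ → ℝ) (v : ℝ) : ℝ :=
  ∑ j : Fin 7, (![-253491379/22, 452495223/22, -135711662/11, 270875723/44, -114798419/66,
      90987349/132, 0] j * v ^ 2 + ![0, 0, 0, -403200, 806400, -806400, 403200] j) * C (j * v)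

theorem pfb1_sub_div_sq_eq {v : ℝ} (hv : v ≠ 0) (hs : sin (v / 2) ≠ 0) :
    (pfb1 v - 90987349 / 53222400) / v ^ 2
      = pfb1Defect cos v / v ^ 14 / (201600 * sinc (v / 2) ^ 10) := by
  have hD := pow_ne_zero 10 hs
  rw [pfb1, sinc_of_ne_zero (div_ne_zero hv two_ne_zero), div_pow, sin_half_pow_ten] at *
  generalize hDdef : (126 - 210 * cos v + 120 * cos (2 * v) - 45 * cos (3 * v)
    + 10 * cos (4 * v) - cos (5 * v)) / 512 = D at hD ⊢
  simp only [pfb1Defect, Fin.sum_univ_seven, Matrix.cons_val]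
  norm_num
  field_simp
  rw [← hDdef]
  -- `field_simp` has turned `cos (2 * v)` into `cos (v * 2)` in part of the goal
  ring_nf

theorem pfb1Defect_cosTaylor (v : ℝ) :
    pfb1Defect (cosTaylor 8) v
      = -16301796103 / 1441440 * v ^ 14 - 74791195537 / 1729728 * v ^ 16 := by
  simp only [pfb1Defect, Fin.sum_univ_seven, Matrix.cons_val, cosTaylor, sum_range_succ,
    sum_range_zero, Nat.factorial]
  norm_num
  ring

theorem isBigO_pfb1Defect_cos_sub :
    (fun v => pfb1Defect cos v - -16301796103 / 1441440 * v ^ 14) =O[𝓝 0] (· ^ 16) := by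
  have hsplit : ∀ v, pfb1Defect cos v - -16301796103 / 1441440 * v ^ 14
      = (pfb1Defect cos v - pfb1Defect (cosTaylor 8) v) - 74791195537 / 1729728 * v ^ 16 := by
    intro v
    rw [pfb1Defect_cosTaylor]
    ring
  refine (IsBigO.sub ?_ (isBigO_const_mul_self _ _ _)).congr_left fun v => (hsplit v).symm
  simp only [pfb1Defect, ← sum_sub_distrib, ← mul_sub]
  exact isBigO_sum_mul_cos_sub_cosTaylor _ _ (fun j _ => by fun_prop) _ 8

/-- The PF-D0 coefficient `pfb1` tends to the corresponding classical
Quinlan–Tremaine coefficient as `v → 0⁺`, with the stated `v²`-Taylor coefficient. -/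
theorem pfd0_b1_limit :
    Tendsto pfb1 (nhdsWithin 0 (Set.Ioi 0)) (nhds (90987349 / 53222400)) ∧
    Tendsto (fun v : ℝ => (pfb1 v - (90987349 / 53222400)) / v ^ 2)
      (nhdsWithin 0 (Set.Ioi 0)) (nhds (-16301796103 / 290594304000)) := by
  have hsinc : Tendsto (fun v : ℝ => 201600 * sinc (v / 2) ^ 10) (𝓝[>] 0) (𝓝 201600) := by
    have hc : Continuous fun v : ℝ => 201600 * sinc (v / 2) ^ 10 := by fun_prop
    simpa using hc.continuousWithinAt.tendsto (x := 0) (s := Set.Ioi 0)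
  have hquot : Tendsto (fun v : ℝ => (pfb1 v - 90987349 / 53222400) / v ^ 2) (𝓝[>] 0)
      (𝓝 (-16301796103 / 290594304000)) := by
    have h := ((tendsto_div_pow_of_isBigO (by norm_num) isBigO_pfb1Defect_cos_sub).mono_left
      (nhdsGT_le_nhdsNE 0)).div hsinc (by norm_num)
    rw [show (-16301796103 / 1441440 : ℝ) / 201600 = -16301796103 / 290594304000 by norm_num] at h
    refine h.congr' ?_
    filter_upwards [Ioo_mem_nhdsGT two_pi_pos] with v ⟨hv0, hv⟩
    exact (pfb1_sub_div_sq_eq hv0.ne' (sin_pos_of_pos_of_lt_pi (by linarith) (by linarith)).ne').symm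
  refine ⟨?_, hquot⟩
  have hsq : Tendsto (fun v : ℝ => v ^ 2) (𝓝[>] 0) (𝓝 0) := by
    simpa using ((continuous_pow 2).tendsto (0 : ℝ)).mono_left nhdsWithin_le_nhds
  have h := (hsq.mul hquot).const_add (90987349 / 53222400)
  rw [zero_mul, add_zero] at h
  refine h.congr' (eventually_nhdsWithin_of_forall fun v (hv : 0 < v) => ?_)
  field_simp
  ring
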